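/- For each d ≥ 1 define h_d(y) := ∫_{−1}^{1} |y + x|^{(5−d)/(d−2)} (1 − x²)^{(d+2)/2} dx for y ∈ (0,1), d ≥ 3. Then h_d is strictly increasing on (0,1) if d ∈ {3,4}, constant if d = 5, and strictly decreasing on (0,1) if d ≥ 6. -/

import Mathlib

/-!
Write `w(x) = (1 - x²)^β`, `r = (5 - d)/(d - 2)`, `β = (d + 2)/2`, and let `P` be the primitive
`u ↦ ∫₀ᵘ |t|^r`. Integrating by parts moves the derivative onto the weight, and since `w` is
even, `h(y) = ∫₀¹ (-w'(x)) (P(y + x) - P(y - x)) dx` with `-w' > 0` on `(0, 1)`. The window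
`P(y + x) - P(y - x) = ∫_{y-x}^{y+x} |t|^r` has `y`-derivative `|y + x|^r - |y - x|^r`, whose
sign for `x, y > 0` is the sign of `r` because `|y - x| < y + x`. Finally `r > 0` for `d = 3, 4`,
`r = 0` for `d = 5` and `-1 < r < 0` for `d ≥ 6`.
-/

open Real intervalIntegral

/-- `h_d(y) = ∫_{−1}^1 |y+x|^{(5−d)/(d−2)} (1−x²)^{(d+2)/2} dx`. -/
noncomputable def hFun (d : ℕ) (y : ℝ) : ℝ :=
  ∫ x in (-1:ℝ)..1, |y + x| ^ ((5 - (d:ℝ)) / ((d:ℝ) - 2)) * (1 - x ^ 2) ^ (((d:ℝ) + 2) / 2)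

open Set MeasureTheory

lemma abs_sub_lt_add_of_pos {t x : ℝ} (ht : 0 < t) (hx : 0 < x) : |t - x| < t + x :=
  abs_lt.2 ⟨by linarith, by linarith⟩

lemma intervalIntegral_pos_of_pos_on_of_ne {f : ℝ → ℝ} {a b c : ℝ}
    (hf : IntervalIntegrable f volume a b) (hpos : ∀ t ∈ Ioo a b, t ≠ c → 0 < f t)
    (hab : a < b) : 0 < ∫ t in a..b, f t := by
  by_cases hc : c ∈ Ioo a b
  · have hac : IntervalIntegrable f volume a c :=
      hf.mono_set (uIcc_subset_uIcc left_mem_uIcc (mem_uIcc_of_le hc.1.le hc.2.le))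
    have hcb : IntervalIntegrable f volume c b :=
      hf.mono_set (uIcc_subset_uIcc (mem_uIcc_of_le hc.1.le hc.2.le) right_mem_uIcc)
    rw [← integral_add_adjacent_intervals hac hcb]
    exact add_pos
      (intervalIntegral_pos_of_pos_on hac
        (fun t ht => hpos t ⟨ht.1, ht.2.trans hc.2⟩ ht.2.ne) hc.1)
      (intervalIntegral_pos_of_pos_on hcb
        (fun t ht => hpos t ⟨hc.1.trans ht.1, ht.2⟩ ht.1.ne') hc.2)
  · exact intervalIntegral_pos_of_pos_on hf
      (fun t ht => hpos t ht (ne_of_mem_of_not_mem ht hc)) hab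

lemma integral_neg_self_eq_integral_add_comp_neg {E : Type*} [NormedAddCommGroup E]
    [NormedSpace ℝ E] {f : ℝ → E} {a : ℝ} (hf : IntervalIntegrable f volume (-a) a) :
    ∫ x in -a..a, f x = ∫ x in (0 : ℝ)..a, (f x + f (-x)) := by
  have h0 : (0 : ℝ) ∈ uIcc (-a) a := by
    rcases le_total 0 a with h | h
    · exact mem_uIcc_of_le (by linarith) h
    · exact mem_uIcc_of_ge h (by linarith)
  have hl : IntervalIntegrable f volume (-a) 0 := hf.mono_set (uIcc_subset_uIcc left_mem_uIcc h0)
  have hr : IntervalIntegrable f volume 0 a := hf.mono_set (uIcc_subset_uIcc h0 right_mem_uIcc)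
  have hl' : IntervalIntegrable (fun x => f (-x)) volume 0 a := by
    simpa using (hl.comp_sub_left 0).symm
  rw [← integral_add_adjacent_intervals hl hr, integral_add hr hl', integral_comp_neg, neg_zero,
    add_comm]

section

variable {r β : ℝ}

lemma measurable_abs_rpow (r : ℝ) : Measurable fun t : ℝ => |t| ^ r :=
  continuous_abs.measurable.pow_const r

lemma locallyIntegrable_abs_rpow (hr : -1 < r) : LocallyIntegrable fun t : ℝ => |t| ^ r := by
  refine locallyIntegrable_of_norm_le_rpow (μ := volume) (C := 1) (α := -r) (by simp)
    (by simpa using neg_lt.mpr hr) (Filter.Eventually.of_forall fun t => ?_)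
    (measurable_abs_rpow r).aestronglyMeasurable
  simp [abs_rpow_of_nonneg (abs_nonneg t)]

lemma intervalIntegrable_abs_rpow (hr : -1 < r) (a b : ℝ) :
    IntervalIntegrable (fun t => |t| ^ r) volume a b :=
  ((locallyIntegrable_abs_rpow hr).integrableOn_isCompact isCompact_uIcc).intervalIntegrable

lemma intervalIntegrable_abs_add_rpow (hr : -1 < r) (c a b : ℝ) :
    IntervalIntegrable (fun t => |t + c| ^ r) volume a b := by
  simpa using (intervalIntegrable_abs_rpow hr (a + c) (b + c)).comp_add_right c

lemma intervalIntegrable_abs_sub_rpow (hr : -1 < r) (c a b : ℝ) :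
    IntervalIntegrable (fun t => |t - c| ^ r) volume a b := by
  simpa [sub_eq_add_neg] using intervalIntegrable_abs_add_rpow hr (-c) a b

noncomputable def primitiveAbsRpow (r u : ℝ) : ℝ := ∫ t in (0 : ℝ)..u, |t| ^ r

lemma continuous_primitiveAbsRpow (hr : -1 < r) : Continuous (primitiveAbsRpow r) :=
  continuous_primitive (intervalIntegrable_abs_rpow hr) 0

lemma hasDerivAt_primitiveAbsRpow (hr : -1 < r) {u : ℝ} (hu : u ≠ 0) :
    HasDerivAt (primitiveAbsRpow r) (|u| ^ r) u :=
  integral_hasDerivAt_right (intervalIntegrable_abs_rpow hr 0 u)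
    (measurable_abs_rpow r).aestronglyMeasurable.stronglyMeasurableAtFilter
    (continuous_abs.continuousAt.rpow_const (Or.inl (abs_ne_zero.mpr hu)))

lemma primitiveAbsRpow_sub_primitiveAbsRpow (hr : -1 < r) (a b : ℝ) :
    primitiveAbsRpow r b - primitiveAbsRpow r a = ∫ t in a..b, |t| ^ r :=
  integral_interval_sub_left (intervalIntegrable_abs_rpow hr 0 b)
    (intervalIntegrable_abs_rpow hr 0 a)

lemma intervalIntegrable_abs_add_rpow_sub_abs_sub_rpow (hr : -1 < r) (c a b : ℝ) :
    IntervalIntegrable (fun t => |t + c| ^ r - |t - c| ^ r) volume a b :=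
  (intervalIntegrable_abs_add_rpow hr c a b).sub (intervalIntegrable_abs_sub_rpow hr c a b)

lemma primitiveAbsRpow_window_sub (hr : -1 < r) (x y z : ℝ) :
    (primitiveAbsRpow r (y + x) - primitiveAbsRpow r (y - x)) -
        (primitiveAbsRpow r (z + x) - primitiveAbsRpow r (z - x)) =
      ∫ t in z..y, (|t + x| ^ r - |t - x| ^ r) := by
  rw [integral_sub (intervalIntegrable_abs_add_rpow hr x z y)
      (intervalIntegrable_abs_sub_rpow hr x z y),
    integral_comp_add_right (fun t => |t| ^ r), integral_comp_sub_right (fun t => |t| ^ r),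
    ← primitiveAbsRpow_sub_primitiveAbsRpow hr, ← primitiveAbsRpow_sub_primitiveAbsRpow hr]
  ring

lemma strictMonoOn_primitiveAbsRpow_window (hr : 0 < r) {x : ℝ} (hx : 0 < x) :
    StrictMonoOn (fun y => primitiveAbsRpow r (y + x) - primitiveAbsRpow r (y - x)) (Ioi 0) := by
  intro z hz y _ hzy
  rw [← sub_pos, primitiveAbsRpow_window_sub (by linarith)]
  refine intervalIntegral_pos_of_pos_on
    (intervalIntegrable_abs_add_rpow_sub_abs_sub_rpow (by linarith) x z y) (fun t ht => ?_) hzy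
  have ht0 : 0 < t := lt_trans hz ht.1
  rw [sub_pos, abs_of_pos (by linarith : 0 < t + x)]
  exact rpow_lt_rpow (abs_nonneg _) (abs_sub_lt_add_of_pos ht0 hx) hr

lemma strictAntiOn_primitiveAbsRpow_window (hr₁ : -1 < r) (hr₀ : r < 0) {x : ℝ}
    (hx : 0 < x) :
    StrictAntiOn (fun y => primitiveAbsRpow r (y + x) - primitiveAbsRpow r (y - x)) (Ioi 0) := by
  intro z hz y _ hzy
  rw [← sub_pos, ← neg_sub, primitiveAbsRpow_window_sub hr₁,
    ← intervalIntegral.integral_neg]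
  -- `t = x` is excluded: there `|t - x| ^ r = 0 ^ r = 0` under Mathlib's convention.
  refine intervalIntegral_pos_of_pos_on_of_ne (c := x)
    (intervalIntegrable_abs_add_rpow_sub_abs_sub_rpow hr₁ x z y).neg (fun t ht htx => ?_) hzy
  have ht0 : 0 < t := lt_trans hz ht.1
  rw [neg_sub, sub_pos, abs_of_pos (by linarith : 0 < t + x)]
  exact rpow_lt_rpow_of_neg (abs_pos.2 (sub_ne_zero.2 htx)) (abs_sub_lt_add_of_pos ht0 hx) hr₀

/-- `-(d/dx) (1 - x²)^β`. -/
noncomputable def negWeightDeriv (β x : ℝ) : ℝ := 2 * β * x * (1 - x ^ 2) ^ (β - 1)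

lemma negWeightDeriv_neg (β x : ℝ) : negWeightDeriv β (-x) = -negWeightDeriv β x := by
  simp only [negWeightDeriv, neg_sq]
  ring

lemma continuous_negWeightDeriv (hβ : 1 ≤ β) : Continuous (negWeightDeriv β) :=
  (continuous_const.mul continuous_id).mul
    ((continuous_const.sub (continuous_pow 2)).rpow_const fun _ => Or.inr (by linarith))

lemma negWeightDeriv_pos (hβ : 0 < β) {x : ℝ} (hx : x ∈ Ioo (0 : ℝ) 1) :
    0 < negWeightDeriv β x :=
  mul_pos (by have := hx.1; positivity) (rpow_pos_of_pos (by nlinarith [hx.1, hx.2]) _)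

lemma continuous_primitiveAbsRpow_window (hr : -1 < r) (y : ℝ) :
    Continuous fun x => primitiveAbsRpow r (y + x) - primitiveAbsRpow r (y - x) := by
  have := continuous_primitiveAbsRpow hr
  fun_prop

lemma integral_abs_add_rpow_mul_eq_integral_negWeightDeriv_mul (hr : -1 < r) (hβ : 1 ≤ β) (y : ℝ) :
    ∫ x in (-1 : ℝ)..1, |y + x| ^ r * (1 - x ^ 2) ^ β =
      ∫ x in (-1 : ℝ)..1, negWeightDeriv β x * primitiveAbsRpow r (y + x) := by
  have hP : Continuous fun x => primitiveAbsRpow r (y + x) :=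
    (continuous_primitiveAbsRpow hr).comp (continuous_const.add continuous_id)
  have hw : Continuous fun x : ℝ => (1 - x ^ 2) ^ β :=
    (continuous_const.sub (continuous_pow 2)).rpow_const fun _ => Or.inr (by linarith)
  have hA : IntervalIntegrable (fun x => |y + x| ^ r * (1 - x ^ 2) ^ β) volume (-1) 1 := by
    simpa [add_comm] using
      (intervalIntegrable_abs_add_rpow hr y (-1) 1).mul_continuousOn hw.continuousOn
  have hB : IntervalIntegrable
      (fun x => negWeightDeriv β x * primitiveAbsRpow r (y + x)) volume (-1) 1 :=
    ((continuous_negWeightDeriv hβ).mul hP).intervalIntegrable _ _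
  have hderiv : ∀ x ∈ Ioo (-1 : ℝ) 1 \ {-y}, HasDerivAt
      (fun x => primitiveAbsRpow r (y + x) * (1 - x ^ 2) ^ β)
      (|y + x| ^ r * (1 - x ^ 2) ^ β -
        negWeightDeriv β x * primitiveAbsRpow r (y + x)) x := by
    intro x hx
    have hyx : y + x ≠ 0 := fun h => hx.2 (by rw [mem_singleton_iff]; linarith)
    have hPx := (hasDerivAt_primitiveAbsRpow hr hyx).comp_const_add y x
    have hwx := ((hasDerivAt_pow 2 x).const_sub 1).rpow_const (p := β) (Or.inr hβ)
    refine (hPx.mul hwx).congr_deriv ?_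
    norm_num [negWeightDeriv]
    ring
  have hftc := integral_eq_of_hasDerivAt_off_countable_of_le _ _ (by norm_num : (-1 : ℝ) ≤ 1)
    (countable_singleton (-y)) (hP.mul hw).continuousOn hderiv (hA.sub hB)
  rw [integral_sub hA hB] at hftc
  norm_num [zero_rpow (by linarith : β ≠ 0)] at hftc
  linarith

lemma integral_abs_add_rpow_mul_eq_integral_negWeightDeriv_mul_window (hr : -1 < r) (hβ : 1 ≤ β)
    (y : ℝ) :
    ∫ x in (-1 : ℝ)..1, |y + x| ^ r * (1 - x ^ 2) ^ β =
      ∫ x in (0 : ℝ)..1, negWeightDeriv β x *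
        (primitiveAbsRpow r (y + x) - primitiveAbsRpow r (y - x)) := by
  have hF : Continuous fun x => negWeightDeriv β x * primitiveAbsRpow r (y + x) :=
    (continuous_negWeightDeriv hβ).mul ((continuous_primitiveAbsRpow hr).comp
      (continuous_const.add continuous_id))
  rw [integral_abs_add_rpow_mul_eq_integral_negWeightDeriv_mul hr hβ,
    integral_neg_self_eq_integral_add_comp_neg (hF.intervalIntegrable _ _)]
  simp only [negWeightDeriv_neg, ← sub_eq_add_neg]
  congr 1 with x
  ring

lemma integral_negWeightDeriv_mul_lt (hβ : 1 ≤ β) {f g : ℝ → ℝ}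
    (hf : Continuous f) (hg : Continuous g) (hfg : ∀ x ∈ Ioo (0 : ℝ) 1, f x < g x) :
    ∫ x in (0 : ℝ)..1, negWeightDeriv β x * f x <
      ∫ x in (0 : ℝ)..1, negWeightDeriv β x * g x := by
  have hwf : Continuous fun x => negWeightDeriv β x * f x :=
    (continuous_negWeightDeriv hβ).mul hf
  have hwg : Continuous fun x => negWeightDeriv β x * g x :=
    (continuous_negWeightDeriv hβ).mul hg
  rw [← sub_pos, ← integral_sub (hwg.intervalIntegrable _ _) (hwf.intervalIntegrable _ _)]
  refine intervalIntegral_pos_of_pos_on ((hwg.sub hwf).intervalIntegrable _ _)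
    (fun x hx => ?_) one_pos
  rw [← mul_sub]
  exact mul_pos (negWeightDeriv_pos (by linarith) hx) (sub_pos.2 (hfg x hx))

theorem strictMonoOn_integral_abs_add_rpow_mul (hr : 0 < r) (hβ : 1 ≤ β) :
    StrictMonoOn (fun y => ∫ x in (-1 : ℝ)..1, |y + x| ^ r * (1 - x ^ 2) ^ β) (Ioi 0) := by
  have hr₁ : -1 < r := by linarith
  intro z hz y hy hzy
  simp only [integral_abs_add_rpow_mul_eq_integral_negWeightDeriv_mul_window hr₁ hβ]
  exact integral_negWeightDeriv_mul_lt hβ (continuous_primitiveAbsRpow_window hr₁ z)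
    (continuous_primitiveAbsRpow_window hr₁ y)
    fun x hx => strictMonoOn_primitiveAbsRpow_window hr hx.1 hz hy hzy

theorem strictAntiOn_integral_abs_add_rpow_mul (hr₁ : -1 < r) (hr₀ : r < 0) (hβ : 1 ≤ β) :
    StrictAntiOn (fun y => ∫ x in (-1 : ℝ)..1, |y + x| ^ r * (1 - x ^ 2) ^ β) (Ioi 0) := by
  intro z hz y hy hzy
  simp only [integral_abs_add_rpow_mul_eq_integral_negWeightDeriv_mul_window hr₁ hβ]
  exact integral_negWeightDeriv_mul_lt hβ (continuous_primitiveAbsRpow_window hr₁ y)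
    (continuous_primitiveAbsRpow_window hr₁ z)
    fun x hx => strictAntiOn_primitiveAbsRpow_window hr₁ hr₀ hx.1 hz hy hzy

end

theorem hFun_monotonicity_general (d : ℕ) :
    ((d = 3 ∨ d = 4) → StrictMonoOn (hFun d) (Set.Ioo 0 1)) ∧
    (d = 5 → ∀ y ∈ Set.Ioo (0:ℝ) 1, ∀ z ∈ Set.Ioo (0:ℝ) 1, hFun d y = hFun d z) ∧
    (6 ≤ d → StrictAntiOn (hFun d) (Set.Ioo 0 1)) := by
  have hβ : (1 : ℝ) ≤ ((d : ℝ) + 2) / 2 := by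
    rw [le_div_iff₀ two_pos]
    linarith [d.cast_nonneg (α := ℝ)]
  refine ⟨?_, ?_, fun hd => ?_⟩
  · rintro (rfl | rfl) <;>
      exact (strictMonoOn_integral_abs_add_rpow_mul (by norm_num) hβ).mono Ioo_subset_Ioi_self
  · rintro rfl y - z -
    norm_num [hFun]
  · have hd' : (6 : ℝ) ≤ d := by exact_mod_cast hd
    have hr₁ : -1 < (5 - (d : ℝ)) / (d - 2) := by
      rw [lt_div_iff₀ (by linarith)]
      linarith
    have hr₀ : (5 - (d : ℝ)) / (d - 2) < 0 := div_neg_of_neg_of_pos (by linarith) (by linarith)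
    exact (strictAntiOn_integral_abs_add_rpow_mul hr₁ hr₀ hβ).mono Ioo_subset_Ioi_self

/-- For `d ≥ 3`, the function `h_d` is strictly increasing on `(0,1)` if `d ∈ {3,4}`,
constant on `(0,1)` if `d = 5`, and strictly decreasing on `(0,1)` if `d ≥ 6`. -/
theorem hFun_monotonicity (d : ℕ) (hd : 3 ≤ d) :
    ((d = 3 ∨ d = 4) → StrictMonoOn (hFun d) (Set.Ioo 0 1)) ∧
    (d = 5 → ∀ y ∈ Set.Ioo (0:ℝ) 1, ∀ z ∈ Set.Ioo (0:ℝ) 1, hFun d y = hFun d z) ∧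
    (6 ≤ d → StrictAntiOn (hFun d) (Set.Ioo 0 1)) :=
  hFun_monotonicity_general d
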